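/- For a bivariate simple max-stable vector (η₁,η₂) with pair extremal coefficient θ, the quantity γ = ∫ P[η₁ ≤ y₁, η₂ ≤ y₂] dμ_{1,2}(y₁,y₂), where μ_{1,2} is the bivariate exponent measure, satisfies γ ≤ 2(2 − θ). -/

import Mathlib

/-!
Write `μ₁,₂` as the image of `σ ⊗ r⁻² dr` under `(w, r) ↦ r • w`. The unit means of `σ` make
both marginals of `μ₁,₂` equal to `μ₁,₂{y < uᵢ} = 1/y`, so `V(y) ≥ 1 / min(y₁, y₂)` and
`P[η ≤ y] ≤ exp(-1 / min(y₁, y₂))`. Along a ray `r • w` this bound integrates against `r⁻² dr` to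
exactly `min(w₁, w₂)` (substitute `s = 1/r`), so `γ ≤ ∫ min(w₁, w₂) dσ = 2 - θ`, which is
nonnegative.
-/

open MeasureTheory Set Filter
open scoped ENNReal Topology

noncomputable def invSqMeasure : Measure ℝ :=
  (volume.restrict (Ioi 0)).withDensity fun r => ENNReal.ofReal (r ^ 2)⁻¹

instance : SFinite invSqMeasure := by
  unfold invSqMeasure; infer_instance

lemma lintegral_invSqMeasure {f : ℝ → ℝ≥0∞} (hf : Measurable f) :
    ∫⁻ r, f r ∂invSqMeasure = ∫⁻ r in Ioi 0, f r * ENNReal.ofReal (r ^ 2)⁻¹ := by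
  rw [invSqMeasure, lintegral_withDensity_eq_lintegral_mul _ (by fun_prop) hf]
  simp only [Pi.mul_apply, mul_comm]

lemma map_inv_invSqMeasure : invSqMeasure.map Inv.inv = volume.restrict (Ioi 0) := by
  ext A hA
  have hs : MeasurableSet (Inv.inv ⁻¹' A ∩ Ioi (0 : ℝ)) :=
    (measurable_inv hA).inter measurableSet_Ioi
  have himage : Inv.inv '' (Inv.inv ⁻¹' A ∩ Ioi (0 : ℝ)) = A ∩ Ioi 0 := by
    ext s; simp
  have hderiv : ∀ x ∈ Inv.inv ⁻¹' A ∩ Ioi (0 : ℝ),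
      HasDerivWithinAt Inv.inv (-(x ^ 2)⁻¹) (Inv.inv ⁻¹' A ∩ Ioi 0) x :=
    fun x hx => (hasDerivAt_inv hx.2.ne').hasDerivWithinAt
  have hjac := lintegral_image_eq_lintegral_abs_deriv_mul hs hderiv inv_injective.injOn 1
  rw [himage] at hjac
  rw [Measure.map_apply measurable_inv hA, Measure.restrict_apply hA, invSqMeasure,
    withDensity_apply _ (measurable_inv hA), Measure.restrict_restrict (measurable_inv hA)]
  simpa [abs_neg] using hjac.symm

lemma invSqMeasure_setOf_lt_mul {y c : ℝ} (hy : 0 < y) (hc : 0 ≤ c) :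
    invSqMeasure {r | y < r * c} = ENNReal.ofReal (c / y) := by
  have hset : {r : ℝ | y < r * c} = Inv.inv ⁻¹' Ioo 0 (c / y) := by
    ext r
    rw [mem_ofPred_eq, mem_preimage, mem_Ioo, inv_pos]
    rcases le_or_gt r 0 with hr | hr
    · exact iff_of_false ((mul_nonpos_of_nonpos_of_nonneg hr hc).trans_lt hy).not_gt
        fun h => hr.not_gt h.1
    · rw [and_iff_right hr, lt_div_iff₀ hy, inv_mul_lt_iff₀ hr]
  rw [hset, ← Measure.map_apply measurable_inv measurableSet_Ioo, map_inv_invSqMeasure,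
    Measure.restrict_apply measurableSet_Ioo, Ioo_inter_Ioi, max_self, Real.volume_Ioo, sub_zero]

lemma lintegral_exp_neg_inv_invSqMeasure {m : ℝ} (hm : 0 < m) :
    ∫⁻ r, ENNReal.ofReal (Real.exp (-(r * m)⁻¹)) ∂invSqMeasure = ENNReal.ofReal m := by
  have hneg : -m⁻¹ < 0 := neg_lt_zero.mpr (inv_pos.mpr hm)
  calc ∫⁻ r, ENNReal.ofReal (Real.exp (-(r * m)⁻¹)) ∂invSqMeasure
      = ∫⁻ r, ENNReal.ofReal (Real.exp (-m⁻¹ * r⁻¹)) ∂invSqMeasure := by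
        simp only [neg_mul, mul_inv_rev]
    _ = ∫⁻ s in Ioi 0, ENNReal.ofReal (Real.exp (-m⁻¹ * s)) := by
        rw [← map_inv_invSqMeasure, lintegral_map (by fun_prop) measurable_inv]
    _ = ENNReal.ofReal m := by
        rw [← ofReal_integral_eq_lintegral_ofReal (integrableOn_exp_mul_Ioi hneg 0)
          (ae_of_all _ fun _ => (Real.exp_pos _).le), integral_exp_mul_Ioi hneg]
        simp

/-- The exponent measure `A ↦ ∫∫ 1_A(r • w) r⁻² dr dσ(w)` with spectral measure `σ`. -/
noncomputable def exponentMeasure (σ : Measure (ℝ × ℝ)) : Measure (ℝ × ℝ) :=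
  (σ.prod invSqMeasure).map fun p => p.2 • p.1

lemma eq_exponentMeasure {σ μ : Measure (ℝ × ℝ)}
    (hμ : ∀ A : Set (ℝ × ℝ), MeasurableSet A → μ A =
      ∫⁻ w, (∫⁻ r in Ioi (0 : ℝ), A.indicator (fun _ => (1 : ℝ≥0∞)) (r * w.1, r * w.2)
        * ENNReal.ofReal (r ^ 2)⁻¹ ∂volume) ∂σ) :
    μ = exponentMeasure σ := by
  have hT : Measurable fun p : (ℝ × ℝ) × ℝ => p.2 • p.1 := by fun_prop
  ext A hA
  rw [hμ A hA, exponentMeasure, Measure.map_apply hT hA, Measure.prod_apply (hT hA)]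
  refine lintegral_congr fun w => ?_
  have hray : MeasurableSet (Prod.mk w ⁻¹' ((fun p : (ℝ × ℝ) × ℝ => p.2 • p.1) ⁻¹' A)) :=
    measurable_prodMk_left (hT hA)
  rw [← lintegral_indicator_one hray, lintegral_invSqMeasure (measurable_one.indicator hray)]
  rfl

lemma exponentMeasure_setOf_lt {σ : Measure (ℝ × ℝ)} {φ : ℝ × ℝ → ℝ} (hφ : Measurable φ)
    (hφ_smul : ∀ (r : ℝ) w, φ (r • w) = r * φ w) (hφ_nonneg : ∀ᵐ w ∂σ, 0 ≤ φ w)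
    (hφ_int : Integrable φ σ) {y : ℝ} (hy : 0 < y) :
    exponentMeasure σ {u | y < φ u} = ENNReal.ofReal ((∫ w, φ w ∂σ) / y) := by
  have hT : Measurable fun p : (ℝ × ℝ) × ℝ => p.2 • p.1 := by fun_prop
  have hA : MeasurableSet {u | y < φ u} := measurableSet_lt measurable_const hφ
  rw [exponentMeasure, Measure.map_apply hT hA, Measure.prod_apply (hT hA), ← integral_div,
    ofReal_integral_eq_lintegral_ofReal (hφ_int.div_const y)
      (hφ_nonneg.mono fun w hw => div_nonneg hw hy.le)]
  refine lintegral_congr_ae (hφ_nonneg.mono fun w hw => ?_)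
  simp only [preimage_ofPred_eq, hφ_smul]
  exact invSqMeasure_setOf_lt_mul hy hw

lemma inv_min_le_toReal_measure_setOf_lt_or_lt {ν : Measure (ℝ × ℝ)}
    (h₁ : ∀ y : ℝ, 0 < y → ν {u | y < u.1} = ENNReal.ofReal y⁻¹)
    (h₂ : ∀ y : ℝ, 0 < y → ν {u | y < u.2} = ENNReal.ofReal y⁻¹)
    {y₁ y₂ : ℝ} (hy₁ : 0 < y₁) (hy₂ : 0 < y₂) :
    (min y₁ y₂)⁻¹ ≤ (ν {u | y₁ < u.1 ∨ y₂ < u.2}).toReal := by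
  have hfin : ν {u | y₁ < u.1 ∨ y₂ < u.2} ≠ ⊤ := by
    refine ne_top_of_le_ne_top ?_ (measure_union_le {u : ℝ × ℝ | y₁ < u.1} {u | y₂ < u.2})
    simp [h₁ y₁ hy₁, h₂ y₂ hy₂]
  have hsub₁ : {u : ℝ × ℝ | y₁ < u.1} ⊆ {u | y₁ < u.1 ∨ y₂ < u.2} := fun _ => Or.inl
  have hsub₂ : {u : ℝ × ℝ | y₂ < u.2} ⊆ {u | y₁ < u.1 ∨ y₂ < u.2} := fun _ => Or.inr
  rcases min_choice y₁ y₂ with h | h <;> rw [h]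
  · simpa [h₁ y₁ hy₁, hy₁.le] using ENNReal.toReal_mono hfin (measure_mono hsub₁)
  · simpa [h₂ y₂ hy₂, hy₂.le] using ENNReal.toReal_mono hfin (measure_mono hsub₂)

lemma eq_zero_of_forall_le_ofReal_exp_neg_inv {a : ℝ≥0∞}
    (h : ∀ ε : ℝ, 0 < ε → a ≤ ENNReal.ofReal (Real.exp (-ε⁻¹))) : a = 0 := by
  have hlim : Tendsto (fun ε : ℝ => ENNReal.ofReal (Real.exp (-ε⁻¹))) (𝓝[>] 0) (𝓝 0) := by
    simpa using ENNReal.tendsto_ofReal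
      (Real.tendsto_exp_atBot.comp (tendsto_neg_atTop_atBot.comp tendsto_inv_nhdsGT_zero))
  exact nonpos_iff_eq_zero.mp (ge_of_tendsto hlim (eventually_nhdsWithin_of_forall h))

section DistributionBound

variable {g : ℝ × ℝ → ℝ≥0∞} (hmono : Monotone g)
  (hbound : ∀ y : ℝ × ℝ, 0 < y.1 → 0 < y.2 → g y ≤ ENNReal.ofReal (Real.exp (-(min y.1 y.2)⁻¹)))
include hmono hbound

lemma eq_zero_of_min_nonpos {y : ℝ × ℝ} (hy : min y.1 y.2 ≤ 0) : g y = 0 := by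
  refine eq_zero_of_forall_le_ofReal_exp_neg_inv fun ε hε => ?_
  have hmin : min (max y.1 ε) (max y.2 ε) = ε := by
    rw [← max_min_distrib_right, max_eq_right (hy.trans hε.le)]
  calc g y ≤ g (max y.1 ε, max y.2 ε) := hmono ⟨le_max_left _ _, le_max_left _ _⟩
    _ ≤ ENNReal.ofReal (Real.exp (-ε⁻¹)) := by
      simpa only [hmin] using
        hbound (max y.1 ε, max y.2 ε) (lt_max_of_lt_right hε) (lt_max_of_lt_right hε)

lemma lintegral_smul_invSqMeasure_le {w : ℝ × ℝ} (hw₁ : 0 ≤ w.1) (hw₂ : 0 ≤ w.2) :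
    ∫⁻ r, g (r • w) ∂invSqMeasure ≤ ENNReal.ofReal (min w.1 w.2) := by
  rcases (le_min hw₁ hw₂).eq_or_lt with h | h
  · have hzero : ∀ r : ℝ, g (r • w) = 0 := fun r => by
      refine eq_zero_of_min_nonpos hmono hbound ?_
      rcases min_choice w.1 w.2 with hm | hm <;> rw [hm] at h <;> simp [← h]
    simp [hzero]
  calc ∫⁻ r, g (r • w) ∂invSqMeasure
      ≤ ∫⁻ r, ENNReal.ofReal (Real.exp (-(r * min w.1 w.2)⁻¹)) ∂invSqMeasure := by
        refine lintegral_mono fun r => ?_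
        rcases le_or_gt r 0 with hr | hr
        · have hle : min (r • w).1 (r • w).2 ≤ 0 := by
            simpa using min_le_left _ _ |>.trans (mul_nonpos_of_nonpos_of_nonneg hr hw₁)
          rw [eq_zero_of_min_nonpos hmono hbound hle]
          exact zero_le
        · simpa [mul_min_of_nonneg _ _ hr.le] using
            hbound (r • w) (mul_pos hr (h.trans_le (min_le_left _ _)))
              (mul_pos hr (h.trans_le (min_le_right _ _)))
    _ = ENNReal.ofReal (min w.1 w.2) := lintegral_exp_neg_inv_invSqMeasure h

lemma lintegral_exponentMeasure_le {σ : Measure (ℝ × ℝ)} (hnn : ∀ᵐ w ∂σ, 0 ≤ w.1 ∧ 0 ≤ w.2)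
    (hint : Integrable (fun w : ℝ × ℝ => min w.1 w.2) σ) :
    ∫⁻ y, g y ∂exponentMeasure σ ≤ ENNReal.ofReal (∫ w, min w.1 w.2 ∂σ) :=
  calc ∫⁻ y, g y ∂exponentMeasure σ
      ≤ ∫⁻ p, g (p.2 • p.1) ∂σ.prod invSqMeasure := lintegral_map_le _ _
    _ ≤ ∫⁻ w, ∫⁻ r, g (r • w) ∂invSqMeasure ∂σ := lintegral_prod_le _
    _ ≤ ∫⁻ w, ENNReal.ofReal (min w.1 w.2) ∂σ := lintegral_mono_ae <| hnn.mono fun _ hw =>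
        lintegral_smul_invSqMeasure_le hmono hbound hw.1 hw.2
    _ = ENNReal.ofReal (∫ w, min w.1 w.2 ∂σ) :=
        (ofReal_integral_eq_lintegral_ofReal hint (hnn.mono fun _ hw => le_min hw.1 hw.2)).symm

end DistributionBound

lemma integral_min_eq_sub_integral_max {α : Type*} [MeasurableSpace α] {μ : Measure α}
    {f g : α → ℝ} (hf : Integrable f μ) (hg : Integrable g μ) :
    ∫ a, min (f a) (g a) ∂μ = ∫ a, f a ∂μ + ∫ a, g a ∂μ - ∫ a, max (f a) (g a) ∂μ := by
  have hmin : ∀ a, min (f a) (g a) = f a + g a - max (f a) (g a) := fun a => by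
    linarith [min_add_max (f a) (g a)]
  simp_rw [hmin]
  have hsum : Integrable (fun a => f a + g a) μ := hf.add hg
  have hmax : Integrable (fun a => max (f a) (g a)) μ := hf.sup hg
  rw [integral_sub hsum hmax, integral_add hf hg]

theorem stmt16_general {Ω : Type*} [MeasurableSpace Ω] (P : Measure Ω)
    (σ : Measure (ℝ × ℝ))
    (hnn : ∀ᵐ w ∂σ, 0 ≤ w.1 ∧ 0 ≤ w.2)
    (hi1 : Integrable (fun w : ℝ × ℝ => w.1) σ)
    (hi2 : Integrable (fun w : ℝ × ℝ => w.2) σ)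
    (h1 : ∫ w, w.1 ∂σ = 1) (h2 : ∫ w, w.2 ∂σ = 1)
    (θ : ℝ) (hθ : θ = ∫ w, max w.1 w.2 ∂σ)
    (μ12 : Measure (ℝ × ℝ))
    (hμ : ∀ A : Set (ℝ × ℝ), MeasurableSet A → μ12 A =
        ∫⁻ w, (∫⁻ r in Set.Ioi (0 : ℝ),
          A.indicator (fun _ => (1 : ℝ≥0∞)) (r * w.1, r * w.2)
            * ENNReal.ofReal (r ^ 2)⁻¹ ∂volume) ∂σ)
    (η₁ η₂ : Ω → ℝ)
    (hjoint : ∀ y₁ y₂ : ℝ, 0 < y₁ → 0 < y₂ →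
      P {ω | η₁ ω ≤ y₁ ∧ η₂ ω ≤ y₂} =
        ENNReal.ofReal (Real.exp (-(μ12 {w | y₁ < w.1 ∨ y₂ < w.2}).toReal))) :
    ∫⁻ y, P {ω | η₁ ω ≤ y.1 ∧ η₂ ω ≤ y.2} ∂μ12 ≤ ENNReal.ofReal (2 * (2 - θ)) := by
  obtain rfl : μ12 = exponentMeasure σ := eq_exponentMeasure hμ
  have hmarg₁ : ∀ y : ℝ, 0 < y → exponentMeasure σ {u | y < u.1} = ENNReal.ofReal y⁻¹ :=
    fun y hy => by
      simpa [h1] using exponentMeasure_setOf_lt measurable_fst (fun _ _ => rfl)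
        (hnn.mono fun _ hw => hw.1) hi1 hy
  have hmarg₂ : ∀ y : ℝ, 0 < y → exponentMeasure σ {u | y < u.2} = ENNReal.ofReal y⁻¹ :=
    fun y hy => by
      simpa [h2] using exponentMeasure_setOf_lt measurable_snd (fun _ _ => rfl)
        (hnn.mono fun _ hw => hw.2) hi2 hy
  have hmono : Monotone fun y : ℝ × ℝ => P {ω | η₁ ω ≤ y.1 ∧ η₂ ω ≤ y.2} :=
    fun _ _ h => measure_mono fun _ hω => ⟨hω.1.trans h.1, hω.2.trans h.2⟩
  have hbound : ∀ y : ℝ × ℝ, 0 < y.1 → 0 < y.2 →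
      P {ω | η₁ ω ≤ y.1 ∧ η₂ ω ≤ y.2} ≤ ENNReal.ofReal (Real.exp (-(min y.1 y.2)⁻¹)) := by
    intro y hy₁ hy₂
    rw [hjoint _ _ hy₁ hy₂]
    gcongr
    exact inv_min_le_toReal_measure_setOf_lt_or_lt hmarg₁ hmarg₂ hy₁ hy₂
  have hmin : ∫ w, min w.1 w.2 ∂σ = 2 - θ := by
    rw [integral_min_eq_sub_integral_max hi1 hi2, h1, h2, hθ, one_add_one_eq_two]
  have hmin_nonneg : 0 ≤ 2 - θ :=
    hmin ▸ integral_nonneg_of_ae (hnn.mono fun _ hw => le_min hw.1 hw.2)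
  calc ∫⁻ y, P {ω | η₁ ω ≤ y.1 ∧ η₂ ω ≤ y.2} ∂exponentMeasure σ
      ≤ ENNReal.ofReal (∫ w, min w.1 w.2 ∂σ) :=
        lintegral_exponentMeasure_le hmono hbound hnn (hi1.inf hi2)
    _ ≤ ENNReal.ofReal (2 * (2 - θ)) := ENNReal.ofReal_le_ofReal (by linarith)

/-- For a bivariate simple max-stable vector with pair extremal coefficient `θ`,
the quantity `γ = ∫ P[η₁ ≤ y₁, η₂ ≤ y₂] dμ_{1,2}(y₁,y₂)` satisfies
`γ ≤ 2(2 − θ)`. -/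
theorem stmt16 {Ω : Type*} [MeasurableSpace Ω] (P : Measure Ω) [IsProbabilityMeasure P]
    (σ : Measure (ℝ × ℝ)) [IsProbabilityMeasure σ]
    (hnn : ∀ᵐ w ∂σ, 0 ≤ w.1 ∧ 0 ≤ w.2)
    (hi1 : Integrable (fun w : ℝ × ℝ => w.1) σ)
    (hi2 : Integrable (fun w : ℝ × ℝ => w.2) σ)
    (h1 : ∫ w, w.1 ∂σ = 1) (h2 : ∫ w, w.2 ∂σ = 1)
    (θ : ℝ) (hθ : θ = ∫ w, max w.1 w.2 ∂σ)
    (μ12 : Measure (ℝ × ℝ))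
    (hμ : ∀ A : Set (ℝ × ℝ), MeasurableSet A → μ12 A =
        ∫⁻ w, (∫⁻ r in Set.Ioi (0 : ℝ),
          A.indicator (fun _ => (1 : ℝ≥0∞)) (r * w.1, r * w.2)
            * ENNReal.ofReal (r ^ 2)⁻¹ ∂volume) ∂σ)
    (η₁ η₂ : Ω → ℝ) (hη₁ : Measurable η₁) (hη₂ : Measurable η₂)
    (hjoint : ∀ y₁ y₂ : ℝ, 0 < y₁ → 0 < y₂ →
      P {ω | η₁ ω ≤ y₁ ∧ η₂ ω ≤ y₂} =
        ENNReal.ofReal (Real.exp (-(μ12 {w | y₁ < w.1 ∨ y₂ < w.2}).toReal))) :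
    ∫⁻ y, P {ω | η₁ ω ≤ y.1 ∧ η₂ ω ≤ y.2} ∂μ12 ≤ ENNReal.ofReal (2 * (2 - θ)) :=
  stmt16_general P σ hnn hi1 hi2 h1 h2 θ hθ μ12 hμ η₁ η₂ hjoint
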